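/- (ε-Nash Equilibrium transfer from discounted to average reward.) Assume the multi-agent irreducibility assumption (for every deterministic joint policy d : S → A and every kernel P ∈ 𝒫, the matrix P^d is irreducible) and that each 𝒫^a_s is nonempty, compact, and convex. Then for every ε > 0 there exists γ₀ ∈ [0,1) such that for every discount factor γ ∈ (γ₀, 1), every ε-Nash Equilibrium π of the γ-discounted distributionally robust Markov game—meaning (1−γ) V^{(π_{−i}, μ_i)}_{𝒫,γ,i}(s) ≤ (1−γ) V^{π}_{𝒫,γ,i}(s) + ε for all i, all μ_i : S → Δ(A_i), and all s—is a 3ε-Nash Equilibrium of the average-reward distributionally robust Markov game: g^{(π_{−i}, μ_i)}_{𝒫,i}(s) ≤ g^{π}_{𝒫,i}(s) + 3ε for all i, all μ_i, and all s. -/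

import Mathlib

open scoped BigOperators
open Matrix Filter

/-- Support function `σ_Q(V) = min_{p ∈ Q} ∑_{s'} p(s') V(s')` (as an infimum,
which is attained when `Q` is nonempty and compact). -/
noncomputable def suppF {S : Type*} [Fintype S] (Q : Set (S → ℝ)) (V : S → ℝ) : ℝ :=
  sInf ((fun p => ∑ s', p s' * V s') '' Q)

/-- The stochastic matrix `P^π` induced by a stationary policy `π` and a kernel `P`. -/
noncomputable def polMat {S A : Type*} [Fintype S] [Fintype A]
    (π : S → A → ℝ) (P : S → A → S → ℝ) : Matrix S S ℝ :=
  Matrix.of fun s s' => ∑ a, π s a * P s a s'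

/-- The reward vector `r^π`. -/
noncomputable def polRew {S A : Type*} [Fintype A]
    (π : S → A → ℝ) (r : S → A → ℝ) : S → ℝ :=
  fun s => ∑ a, π s a * r s a

/-- The average reward `g^π_P(s) = liminf_n (1/n) ∑_{t<n} ((P^π)^t r^π)(s)`. -/
noncomputable def avgR {S A : Type*} [Fintype S] [DecidableEq S] [Fintype A]
    (π : S → A → ℝ) (P : S → A → S → ℝ) (r : S → A → ℝ) (s : S) : ℝ :=
  Filter.liminf
    (fun n : ℕ => (∑ t ∈ Finset.range n, ((polMat π P ^ t) *ᵥ polRew π r) s) / n)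
    Filter.atTop

/-- The robust average reward `g^π_U(s) = inf_{P ∈ U} g^π_P(s)`. -/
noncomputable def robAvgR {S A : Type*} [Fintype S] [DecidableEq S] [Fintype A]
    (U : S → A → Set (S → ℝ)) (π : S → A → ℝ) (r : S → A → ℝ) (s : S) : ℝ :=
  sInf {x | ∃ P : S → A → S → ℝ, (∀ s' a, P s' a ∈ U s' a) ∧ x = avgR π P r s}

/-- A stochastic matrix is irreducible: all states communicate. -/
def IrredM {S : Type*} [Fintype S] [DecidableEq S] (M : Matrix S S ℝ) : Prop :=
  ∀ s s' : S, ∃ k : ℕ, 1 ≤ k ∧ 0 < (M ^ k) s s'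

/-- Assumption 1: for every deterministic policy `d` and every kernel `P ∈ U`,
the matrix `P^d` is irreducible. -/
def Assump1 {S A : Type*} [Fintype S] [DecidableEq S]
    (U : S → A → Set (S → ℝ)) : Prop :=
  ∀ (d : S → A) (P : S → A → S → ℝ), (∀ s a, P s a ∈ U s a) →
    IrredM (Matrix.of fun s s' => P s (d s) s')

/-- The joint policy `π(a|s) = ∏ i π_i(a_i|s)` of a product policy. -/
noncomputable def jointPol {S : Type*} {N : ℕ} {A : Fin N → Type*}
    (π : ∀ i, S → A i → ℝ) : S → (∀ i, A i) → ℝ :=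
  fun s a => ∏ i, π i s (a i)

/-- The `γ`-discounted value `V^π_{P,γ}(s) = ∑_{t=0}^∞ γ^t ((P^π)^t r^π)(s)`. -/
noncomputable def discR {S A : Type*} [Fintype S] [DecidableEq S] [Fintype A]
    (π : S → A → ℝ) (P : S → A → S → ℝ) (r : S → A → ℝ) (γ : ℝ) (s : S) : ℝ :=
  ∑' t : ℕ, γ ^ t * ((polMat π P ^ t) *ᵥ polRew π r) s

/-- The robust `γ`-discounted value `V^π_{U,γ}(s) = inf_{P ∈ U} V^π_{P,γ}(s)`. -/
noncomputable def robDiscR {S A : Type*} [Fintype S] [DecidableEq S] [Fintype A]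
    (U : S → A → Set (S → ℝ)) (π : S → A → ℝ) (r : S → A → ℝ) (γ : ℝ) (s : S) : ℝ :=
  sInf {x | ∃ P : S → A → S → ℝ, (∀ s' a, P s' a ∈ U s' a) ∧ x = discR π P r γ s}

/-!
For a fixed policy and kernel with transition matrix `M`, both the normalized discounted value
`(1 - γ) V` and the Cesàro averages of the rewards are vectors that `M` moves by at most
`1 - γ`, resp. `1 / n`, and both have the same mean `ν ⬝ᵥ r` under a stationary distribution `ν`.
Irreducibility makes the `|S|`-th power of the lazy chain `(1 + M) / 2` entrywise positive, and
Doeblin's contraction of the oscillation seminorm then puts such near-fixed vectors within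
`O(η)` of their mean. By compactness the Doeblin constant is uniform over all policies and
kernels, so `|(1 - γ) V - g| ≤ C (1 - γ)` uniformly; this passes to the robust infima, and for
`C (1 - γ) ≤ ε` each of the two comparisons between discounted and average values costs `ε`.
-/

open Finset
open scoped Topology

section Oscillation

variable {S : Type*} [Fintype S]

lemma dotProduct_mem_Icc {p w : S → ℝ} (hp : p ∈ stdSimplex ℝ S) {a b : ℝ}
    (hw : ∀ u, w u ∈ Set.Icc a b) : p ⬝ᵥ w ∈ Set.Icc a b :=
  (convex_Icc a b).sum_mem (fun u _ => hp.1 u) hp.2 fun u _ => hw u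

variable [Nonempty S]

noncomputable def osc (v : S → ℝ) : ℝ :=
  univ.sup' univ_nonempty v - univ.inf' univ_nonempty v

lemma sub_le_osc (v : S → ℝ) (s s' : S) : v s - v s' ≤ osc v :=
  sub_le_sub (le_sup' v (mem_univ s)) (inf'_le v (mem_univ s'))

lemma osc_le {v : S → ℝ} {c : ℝ} (h : ∀ s s', v s - v s' ≤ c) : osc v ≤ c := by
  obtain ⟨s, -, hs⟩ := exists_mem_eq_sup' univ_nonempty v
  obtain ⟨s', -, hs'⟩ := exists_mem_eq_inf' univ_nonempty v
  rw [osc, hs, hs']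
  exact h s s'

lemma abs_sub_dotProduct_le_osc (v : S → ℝ) {p : S → ℝ} (hp : p ∈ stdSimplex ℝ S) (s : S) :
    |v s - p ⬝ᵥ v| ≤ osc v := by
  have hv : ∀ u, v u ∈ Set.Icc (univ.inf' univ_nonempty v) (univ.sup' univ_nonempty v) :=
    fun u => ⟨inf'_le v (mem_univ u), le_sup' v (mem_univ u)⟩
  have hpv := dotProduct_mem_Icc hp hv
  rw [abs_le, osc]
  constructor <;> linarith [hpv.1, hpv.2, (hv s).1, (hv s).2]

end Oscillation

namespace Matrix

open Polynomial in
/-- By Cayley–Hamilton, `M ^ m` is a polynomial in `M` of degree less than `card n`. -/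
theorem pow_apply_eq_zero_of_forall_lt_card {R n : Type*} [CommRing R] [Nontrivial R]
    [Fintype n] [DecidableEq n] (M : Matrix n n R) {i j : n}
    (h : ∀ k < Fintype.card n, (M ^ k) i j = 0) (m : ℕ) : (M ^ m) i j = 0 := by
  have hne : M.charpoly ≠ 1 := fun h1 => by
    have hdeg := M.charpoly_natDegree_eq_dim
    rw [h1, natDegree_one] at hdeg
    exact (Fintype.card_pos_iff.mpr ⟨i⟩).ne' hdeg.symm
  have hred : aeval M (X ^ m %ₘ M.charpoly) = M ^ m := by
    have h := congrArg (aeval M) (modByMonic_add_div (X ^ m) M.charpoly)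
    rwa [map_add, map_mul, aeval_self_charpoly, zero_mul, add_zero, aeval_X_pow] at h
  have hdeg : (X ^ m %ₘ M.charpoly).natDegree < Fintype.card n :=
    M.charpoly_natDegree_eq_dim ▸ natDegree_modByMonic_lt _ M.charpoly_monic hne
  rw [← hred, aeval_eq_sum_range' hdeg, sum_apply]
  exact sum_eq_zero fun k hk => by rw [smul_apply, h k (mem_range.mp hk), smul_zero]

theorem pow_apply_le_pow_apply {R n : Type*} [Semiring R] [PartialOrder R] [IsOrderedRing R]
    [Fintype n] [DecidableEq n] {X Y : Matrix n n R} (hY : ∀ i j, 0 ≤ Y i j)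
    (hYX : ∀ i j, Y i j ≤ X i j) (k : ℕ) (i j : n) : (Y ^ k) i j ≤ (X ^ k) i j := by
  induction k generalizing j with
  | zero => rfl
  | succ k ih =>
    rw [pow_succ, pow_succ, mul_apply, mul_apply]
    exact sum_le_sum fun l _ =>
      mul_le_mul (ih l) (hYX l j) (hY l j) ((pow_apply_nonneg hY k i l).trans (ih l))

variable {S : Type*} [Fintype S] [DecidableEq S]

lemma row_mem_stdSimplex {M : Matrix S S ℝ} (hM : M ∈ rowStochastic ℝ S) (s : S) :
    M s ∈ stdSimplex ℝ S :=
  ⟨fun _ => nonneg_of_mem_rowStochastic hM, sum_row_of_mem_rowStochastic hM s⟩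

lemma mulVec_mem_Icc {M : Matrix S S ℝ} (hM : M ∈ rowStochastic ℝ S) {w : S → ℝ} {a b : ℝ}
    (hw : ∀ u, w u ∈ Set.Icc a b) (s : S) : (M *ᵥ w) s ∈ Set.Icc a b :=
  dotProduct_mem_Icc (row_mem_stdSimplex hM s) hw

lemma abs_sub_pow_mulVec_le {M : Matrix S S ℝ} (hM : M ∈ rowStochastic ℝ S) {x : S → ℝ}
    {η : ℝ} (hx : ∀ s, |x s - (M *ᵥ x) s| ≤ η) (j : ℕ) (s : S) :
    |x s - (M ^ j *ᵥ x) s| ≤ j * η := by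
  induction j generalizing s with
  | zero => simp
  | succ j ih =>
    have hstep : (M ^ j *ᵥ (x - M *ᵥ x)) s ∈ Set.Icc (-η) η :=
      mulVec_mem_Icc (pow_mem hM j) (fun u => abs_le.mp (hx u)) s
    have hsplit : x s - (M ^ (j + 1) *ᵥ x) s
        = (x s - (M ^ j *ᵥ x) s) + (M ^ j *ᵥ (x - M *ᵥ x)) s := by
      rw [pow_succ, ← mulVec_mulVec, mulVec_sub, Pi.sub_apply]
      ring
    rw [hsplit, Nat.cast_succ, add_mul, one_mul]
    exact (abs_add_le _ _).trans (add_le_add (ih s) (abs_le.mpr hstep))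

lemma dotProduct_pow_mulVec_of_vecMul_eq {M : Matrix S S ℝ} {ν : S → ℝ} (hν : ν ᵥ* M = ν)
    (ρ : S → ℝ) (t : ℕ) : ν ⬝ᵥ (M ^ t *ᵥ ρ) = ν ⬝ᵥ ρ := by
  induction t with
  | zero => rw [pow_zero, one_mulVec]
  | succ t ih => rw [pow_succ', ← mulVec_mulVec, dotProduct_mulVec, hν, ih]

lemma discounted_term_mem_Icc {M : Matrix S S ℝ} (hM : M ∈ rowStochastic ℝ S) {ρ : S → ℝ}
    (hρ : ∀ s, ρ s ∈ Set.Icc (0 : ℝ) 1) {γ : ℝ} (hγ0 : 0 ≤ γ) (t : ℕ) (s : S) :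
    γ ^ t * (M ^ t *ᵥ ρ) s ∈ Set.Icc 0 (γ ^ t) :=
  have h := mulVec_mem_Icc (pow_mem hM t) hρ s
  ⟨mul_nonneg (pow_nonneg hγ0 t) h.1, mul_le_of_le_one_right (pow_nonneg hγ0 t) h.2⟩

lemma summable_discounted {M : Matrix S S ℝ} (hM : M ∈ rowStochastic ℝ S) {ρ : S → ℝ}
    (hρ : ∀ s, ρ s ∈ Set.Icc (0 : ℝ) 1) {γ : ℝ} (hγ0 : 0 ≤ γ) (hγ1 : γ < 1) (s : S) :
    Summable fun t : ℕ => γ ^ t * (M ^ t *ᵥ ρ) s :=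
  (summable_geometric_of_lt_one hγ0 hγ1).of_nonneg_of_le
    (fun t => (discounted_term_mem_Icc hM hρ hγ0 t s).1)
    fun t => (discounted_term_mem_Icc hM hρ hγ0 t s).2

theorem tsum_discounted_eq_add {M : Matrix S S ℝ} (hM : M ∈ rowStochastic ℝ S) {ρ : S → ℝ}
    (hρ : ∀ s, ρ s ∈ Set.Icc (0 : ℝ) 1) {γ : ℝ} (hγ0 : 0 ≤ γ) (hγ1 : γ < 1) (s : S) :
    ∑' t : ℕ, γ ^ t * (M ^ t *ᵥ ρ) s
      = ρ s + γ * (M *ᵥ fun u => ∑' t : ℕ, γ ^ t * (M ^ t *ᵥ ρ) u) s := by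
  have hshift : ∀ t : ℕ, γ ^ (t + 1) * (M ^ (t + 1) *ᵥ ρ) s
      = γ * ∑ u, M s u * (γ ^ t * (M ^ t *ᵥ ρ) u) := fun t => by
    have h : (M ^ (t + 1) *ᵥ ρ) s = ∑ u, M s u * (M ^ t *ᵥ ρ) u := by
      rw [pow_succ', ← mulVec_mulVec]
      rfl
    rw [h, pow_succ, mul_sum, mul_sum]
    exact sum_congr rfl fun u _ => by ring
  rw [(summable_discounted hM hρ hγ0 hγ1 s).tsum_eq_zero_add, pow_zero, pow_zero, one_mul,
    one_mulVec]
  simp only [hshift, tsum_mul_left]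
  rw [Summable.tsum_finsetSum fun u _ => (summable_discounted hM hρ hγ0 hγ1 u).mul_left (M s u)]
  simp only [tsum_mul_left]
  rfl

/-- Averaging with the identity makes an irreducible chain aperiodic. -/
noncomputable def lazy (M : Matrix S S ℝ) : Matrix S S ℝ := (2 : ℝ)⁻¹ • (1 + M)

lemma lazy_mem_rowStochastic {M : Matrix S S ℝ} (hM : M ∈ rowStochastic ℝ S) :
    lazy M ∈ rowStochastic ℝ S := by
  have h := convex_rowStochastic (one_mem _) hM (by norm_num : (0 : ℝ) ≤ 2⁻¹)
    (by norm_num : (0 : ℝ) ≤ 2⁻¹) (by norm_num)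
  rwa [← smul_add] at h

lemma sub_lazy_mulVec (M : Matrix S S ℝ) (x : S → ℝ) :
    x - lazy M *ᵥ x = (2 : ℝ)⁻¹ • (x - M *ᵥ x) := by
  rw [lazy, smul_mulVec, add_mulVec, one_mulVec]
  module

theorem lazy_pow_card_pos {M : Matrix S S ℝ} (hM : M ∈ rowStochastic ℝ S) (hirr : IrredM M)
    (s s' : S) : 0 < (lazy M ^ Fintype.card S) s s' := by
  set n := Fintype.card S
  obtain ⟨k, -, hk⟩ := hirr s s'
  obtain ⟨j, hj, hpos⟩ : ∃ j < n, 0 < (M ^ j) s s' := by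
    by_contra! h
    exact hk.ne' (pow_apply_eq_zero_of_forall_lt_card M
      (fun j hj => le_antisymm (h j hj) (nonneg_of_mem_rowStochastic (pow_mem hM j))) k)
  have hbinom : lazy M ^ n = (2 : ℝ)⁻¹ ^ n • ∑ m ∈ range (n + 1), n.choose m • M ^ m := by
    rw [lazy, smul_pow, add_comm, (Commute.one_right M).add_pow]
    simp only [one_pow, mul_one, ← nsmul_eq_mul']
  rw [hbinom, smul_apply, sum_apply, smul_eq_mul]
  refine mul_pos (by positivity) (sum_pos' (fun m _ => ?_) ⟨j, mem_range.mpr (by omega), ?_⟩)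
  · rw [smul_apply, nsmul_eq_mul]
    exact mul_nonneg (Nat.cast_nonneg _) (nonneg_of_mem_rowStochastic (pow_mem hM m))
  · rw [smul_apply, nsmul_eq_mul]
    exact mul_pos (Nat.cast_pos.mpr (Nat.choose_pos (by omega))) hpos

variable [Nonempty S]

theorem osc_mulVec_le {M : Matrix S S ℝ} (hM : M ∈ rowStochastic ℝ S) {δ : ℝ}
    (hδ : ∀ s s', δ ≤ M s s') (v : S → ℝ) :
    osc (M *ᵥ v) ≤ (1 - Fintype.card S * δ) * osc v := by
  -- Each row is `δ` times the all-ones row plus a nonnegative remainder of mass `c`.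
  set c := 1 - Fintype.card S * δ
  have hrow : ∀ s, (M *ᵥ v) s = δ * ∑ u, v u + ∑ u, (M s u - δ) * v u := fun s => by
    simp only [mulVec, dotProduct, mul_sum, ← sum_add_distrib]
    exact sum_congr rfl fun u _ => by ring
  have hmass : ∀ s, ∑ u, (M s u - δ) = c := fun s => by
    rw [sum_sub_distrib, sum_row_of_mem_rowStochastic hM, sum_const, card_univ, nsmul_eq_mul]
  have hupper : ∀ s, ∑ u, (M s u - δ) * v u ≤ c * univ.sup' univ_nonempty v := fun s => by
    rw [← hmass s, sum_mul]
    exact sum_le_sum fun u _ =>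
      mul_le_mul_of_nonneg_left (le_sup' v (mem_univ u)) (sub_nonneg.mpr (hδ s u))
  have hlower : ∀ s, c * univ.inf' univ_nonempty v ≤ ∑ u, (M s u - δ) * v u := fun s => by
    rw [← hmass s, sum_mul]
    exact sum_le_sum fun u _ =>
      mul_le_mul_of_nonneg_left (inf'_le v (mem_univ u)) (sub_nonneg.mpr (hδ s u))
  refine osc_le fun s s' => ?_
  rw [hrow, hrow, osc, mul_sub]
  linarith [hupper s, hlower s']

theorem osc_le_of_abs_sub_mulVec_le {M : Matrix S S ℝ} (hM : M ∈ rowStochastic ℝ S) {K : ℕ}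
    {δ : ℝ} (hδ : 0 < δ) (hK : ∀ s s', δ ≤ (M ^ K) s s') {x : S → ℝ} {η : ℝ}
    (hx : ∀ s, |x s - (M *ᵥ x) s| ≤ η) :
    osc x ≤ 2 * K * η / (Fintype.card S * δ) := by
  have hdrift : osc x ≤ osc (M ^ K *ᵥ x) + 2 * K * η := osc_le fun s s' => by
    have h := abs_le.mp (abs_sub_pow_mulVec_le hM hx K s)
    have h' := abs_le.mp (abs_sub_pow_mulVec_le hM hx K s')
    linarith [sub_le_osc (M ^ K *ᵥ x) s s', h.2, h'.1]
  have hcontr := osc_mulVec_le (pow_mem hM K) hK x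
  rw [le_div_iff₀ (by positivity)]
  linarith

theorem exists_stationary {M : Matrix S S ℝ} (hM : M ∈ rowStochastic ℝ S) :
    ∃ ν ∈ stdSimplex ℝ S, ν ᵥ* M = ν := by
  obtain ⟨ν, hν0, hν⟩ : ∃ ν ≠ 0, ν ᵥ* (M - 1) = 0 := by
    rw [exists_vecMul_eq_zero_iff, ← exists_mulVec_eq_zero_iff]
    exact ⟨1, one_ne_zero, by rw [sub_mulVec, one_vecMul_of_mem_rowStochastic hM, one_mulVec,
      sub_self]⟩
  have hfix : ν ᵥ* M = ν := by rwa [vecMul_sub, vecMul_one, sub_eq_zero] at hν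
  -- `|ν|` is subinvariant by the triangle inequality, hence invariant since `M` preserves mass.
  set w : S → ℝ := fun s => |ν s|
  have hsub : ∀ s', w s' ≤ (w ᵥ* M) s' := fun s' =>
    calc |ν s'| = |∑ s, ν s * M s s'| := (congrArg abs (congrFun hfix s')).symm
      _ ≤ ∑ s, |ν s * M s s'| := abs_sum_le_sum_abs _ _
      _ = (w ᵥ* M) s' := sum_congr rfl fun s _ => by
        rw [abs_mul, abs_of_nonneg (nonneg_of_mem_rowStochastic hM)]
  have hmass : ∑ s', w s' = ∑ s', (w ᵥ* M) s' := by
    have h := dotProduct_mulVec w M 1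
    rw [one_vecMul_of_mem_rowStochastic hM] at h
    simpa [dotProduct] using h
  have hinv : w ᵥ* M = w := funext fun s' =>
    (((sum_eq_sum_iff_of_le fun s _ => hsub s).mp hmass) s' (mem_univ _)).symm
  have hpos : 0 < ∑ s, w s := by
    obtain ⟨s, hs⟩ := Function.ne_iff.mp hν0
    exact sum_pos' (fun _ _ => abs_nonneg _) ⟨s, mem_univ _, abs_pos.mpr hs⟩
  refine ⟨(∑ s, w s)⁻¹ • w, ⟨fun s => ?_, ?_⟩, by rw [smul_vecMul, hinv]⟩
  · exact smul_nonneg (inv_nonneg.mpr hpos.le) (abs_nonneg _)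
  · simp only [Pi.smul_apply, smul_eq_mul, ← mul_sum]
    exact inv_mul_cancel₀ hpos.ne'

theorem abs_sub_dotProduct_le_of_abs_sub_mulVec_le {M : Matrix S S ℝ}
    (hM : M ∈ rowStochastic ℝ S) {K : ℕ} {δ : ℝ} (hδ : 0 < δ)
    (hK : ∀ s s', δ ≤ (lazy M ^ K) s s') {ν : S → ℝ} (hν : ν ∈ stdSimplex ℝ S) {x : S → ℝ}
    {η : ℝ} (hx : ∀ s, |x s - (M *ᵥ x) s| ≤ η) (s : S) :
    |x s - ν ⬝ᵥ x| ≤ K * η / (Fintype.card S * δ) := by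
  have hlazy : ∀ s, |x s - (lazy M *ᵥ x) s| ≤ η / 2 := fun s => by
    rw [← Pi.sub_apply, sub_lazy_mulVec, Pi.smul_apply, smul_eq_mul, abs_mul,
      abs_of_pos (by norm_num : (0 : ℝ) < 2⁻¹), Pi.sub_apply]
    linarith [hx s]
  calc |x s - ν ⬝ᵥ x| ≤ osc x := abs_sub_dotProduct_le_osc x hν s
    _ ≤ 2 * K * (η / 2) / (Fintype.card S * δ) :=
      osc_le_of_abs_sub_mulVec_le (lazy_mem_rowStochastic hM) hδ hK hlazy
    _ = K * η / (Fintype.card S * δ) := by ring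

theorem tendsto_cesaro {M : Matrix S S ℝ} (hM : M ∈ rowStochastic ℝ S) {K : ℕ} {δ : ℝ}
    (hδ : 0 < δ) (hK : ∀ s s', δ ≤ (lazy M ^ K) s s') {ν : S → ℝ} (hν : ν ∈ stdSimplex ℝ S)
    (hνM : ν ᵥ* M = ν) {ρ : S → ℝ} (hρ : ∀ s, ρ s ∈ Set.Icc (0 : ℝ) 1) (s : S) :
    Tendsto (fun n : ℕ => (∑ t ∈ range n, (M ^ t *ᵥ ρ) s) / n) atTop (𝓝 (ν ⬝ᵥ ρ)) := by
  set A : ℕ → S → ℝ := fun n => (n : ℝ)⁻¹ • ∑ t ∈ range n, M ^ t *ᵥ ρ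
  have hA : ∀ n : ℕ, (∑ t ∈ range n, (M ^ t *ᵥ ρ) s) / n = A n s := fun n => by
    simp only [A, Pi.smul_apply, Finset.sum_apply, smul_eq_mul, div_eq_inv_mul]
  have hmean : ∀ n : ℕ, 1 ≤ n → ν ⬝ᵥ A n = ν ⬝ᵥ ρ := fun n hn => by
    simp only [A, dotProduct_smul, dotProduct_sum, dotProduct_pow_mulVec_of_vecMul_eq hνM,
      sum_const, card_range, nsmul_eq_mul, smul_eq_mul]
    field_simp
  have hdrift : ∀ n : ℕ, 1 ≤ n → ∀ u, |A n u - (M *ᵥ A n) u| ≤ 1 * (n : ℝ)⁻¹ := fun n hn u => by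
    have htel : A n - M *ᵥ A n = (n : ℝ)⁻¹ • (ρ - M ^ n *ᵥ ρ) := by
      simp only [A, mulVec_smul, mulVec_sum, mulVec_mulVec, ← pow_succ', ← smul_sub,
        ← sum_sub_distrib]
      rw [sum_range_sub' (fun t => M ^ t *ᵥ ρ), pow_zero, one_mulVec]
    have hρn := mulVec_mem_Icc (pow_mem hM n) hρ u
    rw [← Pi.sub_apply, htel, Pi.smul_apply, smul_eq_mul, abs_mul,
      abs_of_pos (inv_pos.mpr (Nat.cast_pos.mpr hn)), mul_comm, Pi.sub_apply]
    gcongr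
    exact abs_le.mpr ⟨by linarith [(hρ u).1, hρn.2], by linarith [(hρ u).2, hρn.1]⟩
  have hclose : ∀ n : ℕ, 1 ≤ n → ‖A n s - ν ⬝ᵥ ρ‖ ≤ K / (Fintype.card S * δ) / n :=
    fun n hn => by
      rw [Real.norm_eq_abs, ← hmean n hn]
      refine (abs_sub_dotProduct_le_of_abs_sub_mulVec_le hM hδ hK hν (hdrift n hn) s).trans_eq ?_
      ring
  simp only [hA]
  refine tendsto_sub_nhds_zero_iff.mp (squeeze_zero_norm' ?_
    (tendsto_const_div_atTop_nhds_zero_nat (K / (Fintype.card S * δ))))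
  filter_upwards [eventually_ge_atTop 1] with n hn using hclose n hn

theorem abs_discounted_sub_le {M : Matrix S S ℝ} (hM : M ∈ rowStochastic ℝ S) {K : ℕ} {δ : ℝ}
    (hδ : 0 < δ) (hK : ∀ s s', δ ≤ (lazy M ^ K) s s') {ν : S → ℝ} (hν : ν ∈ stdSimplex ℝ S)
    (hνM : ν ᵥ* M = ν) {ρ : S → ℝ} (hρ : ∀ s, ρ s ∈ Set.Icc (0 : ℝ) 1) {γ : ℝ} (hγ0 : 0 ≤ γ)
    (hγ1 : γ < 1) (s : S) :
    |(1 - γ) * ∑' t : ℕ, γ ^ t * (M ^ t *ᵥ ρ) s - ν ⬝ᵥ ρ|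
      ≤ K * (1 - γ) / (Fintype.card S * δ) := by
  have h1γ : 0 < 1 - γ := sub_pos.mpr hγ1
  set x : S → ℝ := (1 - γ) • fun u => ∑' t : ℕ, γ ^ t * (M ^ t *ᵥ ρ) u
  have hx : ∀ u, x u ∈ Set.Icc 0 1 := fun u => by
    have hle : ∑' t : ℕ, γ ^ t * (M ^ t *ᵥ ρ) u ≤ (1 - γ)⁻¹ :=
      tsum_geometric_of_lt_one hγ0 hγ1 ▸ (summable_discounted hM hρ hγ0 hγ1 u).tsum_le_tsum
        (fun t => (discounted_term_mem_Icc hM hρ hγ0 t u).2)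
        (summable_geometric_of_lt_one hγ0 hγ1)
    refine ⟨mul_nonneg h1γ.le (tsum_nonneg fun t => (discounted_term_mem_Icc hM hρ hγ0 t u).1), ?_⟩
    calc x u ≤ (1 - γ) * (1 - γ)⁻¹ := mul_le_mul_of_nonneg_left hle h1γ.le
      _ = 1 := mul_inv_cancel₀ h1γ.ne'
  have hbellman : x = (1 - γ) • ρ + γ • M *ᵥ x := funext fun u => by
    simp only [x, mulVec_smul, Pi.add_apply, Pi.smul_apply, smul_eq_mul]
    rw [tsum_discounted_eq_add hM hρ hγ0 hγ1 u]
    ring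
  have hdrift : ∀ u, |x u - (M *ᵥ x) u| ≤ 1 - γ := fun u => by
    have hMx := mulVec_mem_Icc hM hx u
    have hsub : x u - (M *ᵥ x) u = (1 - γ) * (ρ u - (M *ᵥ x) u) := by
      rw [congrFun hbellman u, Pi.add_apply, Pi.smul_apply, Pi.smul_apply, smul_eq_mul,
        smul_eq_mul]
      ring
    rw [hsub, abs_mul, abs_of_pos h1γ]
    refine mul_le_of_le_one_right h1γ.le (abs_le.mpr ⟨?_, ?_⟩)
    · linarith [(hρ u).1, hMx.2]
    · linarith [(hρ u).2, hMx.1]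
  have hmean : ν ⬝ᵥ x = ν ⬝ᵥ ρ := by
    have h : ν ⬝ᵥ x = (1 - γ) * ν ⬝ᵥ ρ + γ * ν ⬝ᵥ x := by
      conv_lhs => rw [hbellman]
      rw [dotProduct_add, dotProduct_smul, dotProduct_smul, dotProduct_mulVec, hνM, smul_eq_mul,
        smul_eq_mul]
    exact mul_left_cancel₀ h1γ.ne' (by linarith)
  have hclose := abs_sub_dotProduct_le_of_abs_sub_mulVec_le hM hδ hK hν hdrift s
  rwa [hmean] at hclose

theorem exists_forall_le_lazy_pow_of_isCompact {𝓜 : Set (Matrix S S ℝ)}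
    (h𝓜 : IsCompact 𝓜) (hirr : ∀ M ∈ 𝓜, M ∈ rowStochastic ℝ S ∧ IrredM M) :
    ∃ δ > 0, ∀ M ∈ 𝓜, ∀ s s', δ ≤ (lazy M ^ Fintype.card S) s s' := by
  set f : Matrix S S ℝ → ℝ :=
    fun M => univ.inf' univ_nonempty fun p : S × S => (lazy M ^ Fintype.card S) p.1 p.2
  have hf : Continuous f := Continuous.finset_inf'_apply _ fun p _ => by
    unfold lazy
    fun_prop
  obtain ⟨δ, hδ, hle⟩ := h𝓜.exists_forall_le' hf.continuousOn (a := 0) fun M hM =>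
    (lt_inf'_iff _).mpr fun p _ => lazy_pow_card_pos (hirr M hM).1 (hirr M hM).2 p.1 p.2
  exact ⟨δ, hδ, fun M hM s s' => (hle M hM).trans (inf'_le _ (mem_univ (s, s')))⟩

end Matrix

lemma IrredM.of_smul_le {S : Type*} [Fintype S] [DecidableEq S] {X Y : Matrix S S ℝ}
    (hY : IrredM Y) (hY0 : ∀ s s', 0 ≤ Y s s') {c : ℝ} (hc : 0 < c)
    (hYX : ∀ s s', c * Y s s' ≤ X s s') : IrredM X := fun s s' => by
  obtain ⟨k, hk, hpos⟩ := hY s s'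
  refine ⟨k, hk, (mul_pos (pow_pos hc k) hpos).trans_le ?_⟩
  have h := Matrix.pow_apply_le_pow_apply (Y := c • Y)
    (fun s s' => mul_nonneg hc.le (hY0 s s')) hYX k s s'
  rwa [smul_pow, Matrix.smul_apply, smul_eq_mul] at h

lemma abs_mul_sInf_sub_sInf_le {ι : Type*} {p : ι → Prop} (hp : ∃ i, p i) {f g : ι → ℝ}
    {a c : ℝ} (ha : 0 < a) (hf : ∀ i, p i → 0 ≤ f i) (hfg : ∀ i, p i → |a * f i - g i| ≤ c) :
    |a * sInf {x | ∃ i, p i ∧ x = f i} - sInf {x | ∃ i, p i ∧ x = g i}| ≤ c := by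
  obtain ⟨i₀, hi₀⟩ := hp
  have hFbdd : BddBelow {x | ∃ i, p i ∧ x = f i} := ⟨0, by rintro _ ⟨i, hi, rfl⟩; exact hf i hi⟩
  have hGbdd : BddBelow {x | ∃ i, p i ∧ x = g i} := ⟨-c, by
    rintro _ ⟨i, hi, rfl⟩
    linarith [(abs_le.mp (hfg i hi)).2, mul_nonneg ha.le (hf i hi)]⟩
  rw [abs_le]
  constructor
  · have h : (sInf {x | ∃ i, p i ∧ x = g i} - c) / a ≤ sInf {x | ∃ i, p i ∧ x = f i} :=
      le_csInf ⟨_, i₀, hi₀, rfl⟩ <| by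
        rintro _ ⟨i, hi, rfl⟩
        rw [div_le_iff₀' ha]
        linarith [csInf_le hGbdd ⟨i, hi, rfl⟩, (abs_le.mp (hfg i hi)).1]
    rw [div_le_iff₀' ha] at h
    linarith
  · have h : a * sInf {x | ∃ i, p i ∧ x = f i} - c ≤ sInf {x | ∃ i, p i ∧ x = g i} :=
      le_csInf ⟨_, i₀, hi₀, rfl⟩ <| by
        rintro _ ⟨i, hi, rfl⟩
        have hFi := mul_le_mul_of_nonneg_left (csInf_le hFbdd ⟨i, hi, rfl⟩) ha.le
        linarith [(abs_le.mp (hfg i hi)).2]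
    linarith

lemma polRew_mem_Icc {S Q : Type*} [Fintype Q] {σ : S → Q → ℝ} {r : S → Q → ℝ}
    (hσ : ∀ s, σ s ∈ stdSimplex ℝ Q) (hr : ∀ s a, r s a ∈ Set.Icc (0 : ℝ) 1) (s : S) :
    polRew σ r s ∈ Set.Icc (0 : ℝ) 1 :=
  dotProduct_mem_Icc (hσ s) (hr s)

lemma jointPol_mem_stdSimplex {S : Type*} {N : ℕ} {A : Fin N → Type*} [∀ i, Fintype (A i)]
    {π : ∀ i, S → A i → ℝ} (hπ : ∀ i s, π i s ∈ stdSimplex ℝ (A i)) (s : S) :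
    jointPol π s ∈ stdSimplex ℝ (∀ i, A i) :=
  ⟨fun a => prod_nonneg fun i _ => (hπ i s).1 (a i), by
    simp only [jointPol, ← Fintype.prod_sum, (hπ _ s).2, prod_const_one]⟩

section MarkovDecisionProcess

variable {S Q : Type*} [Fintype S] [DecidableEq S] [Fintype Q]

lemma polMat_mem_rowStochastic {σ : S → Q → ℝ} {P : S → Q → S → ℝ}
    (hσ : ∀ s, σ s ∈ stdSimplex ℝ Q) (hP : ∀ s a, P s a ∈ stdSimplex ℝ S) :
    polMat σ P ∈ rowStochastic ℝ S := by
  refine mem_rowStochastic_iff_sum.mpr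
    ⟨fun s s' => sum_nonneg fun a _ => mul_nonneg ((hσ s).1 a) ((hP s a).1 s'), fun s => ?_⟩
  simp only [polMat, of_apply]
  rw [sum_comm]
  simp only [← mul_sum, (hP s _).2, mul_one, (hσ s).2]

/-- Every stationary policy puts weight at least `c > 0` on some deterministic policy `d`, so
`P^σ ≥ c P^d` entrywise. -/
lemma polMat_irred [Nonempty S] {U : S → Q → Set (S → ℝ)}
    (hUs : ∀ s a, U s a ⊆ stdSimplex ℝ S) (hirr : Assump1 U) {σ : S → Q → ℝ}
    (hσ : ∀ s, σ s ∈ stdSimplex ℝ Q) {P : S → Q → S → ℝ} (hP : ∀ s a, P s a ∈ U s a) :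
    IrredM (polMat σ P) := by
  have hpos : ∀ s, ∃ a, 0 < σ s a := fun s => by
    by_contra! h
    linarith [sum_nonpos fun a (_ : a ∈ univ) => h a, (hσ s).2]
  choose d hd using hpos
  set c := univ.inf' univ_nonempty fun s => σ s (d s)
  have hc : 0 < c := (lt_inf'_iff _).mpr fun s _ => hd s
  refine (hirr d P hP).of_smul_le (fun s s' => (hUs s (d s) (hP s (d s))).1 s') hc
    fun s s' => ?_
  have hP0 : ∀ a, 0 ≤ P s a s' := fun a => (hUs s a (hP s a)).1 s'
  calc c * P s (d s) s' ≤ σ s (d s) * P s (d s) s' :=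
        mul_le_mul_of_nonneg_right (inf'_le _ (mem_univ s)) (hP0 _)
    _ ≤ polMat σ P s s' :=
        single_le_sum (f := fun a => σ s a * P s a s')
          (fun a _ => mul_nonneg ((hσ s).1 a) (hP0 a)) (mem_univ (d s))

theorem exists_abs_discR_sub_avgR_le [Nonempty S] {U : S → Q → Set (S → ℝ)}
    (hUc : ∀ s a, IsCompact (U s a)) (hUs : ∀ s a, U s a ⊆ stdSimplex ℝ S) (hirr : Assump1 U) :
    ∃ C > 0, ∀ σ : S → Q → ℝ, (∀ s, σ s ∈ stdSimplex ℝ Q) →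
      ∀ P : S → Q → S → ℝ, (∀ s a, P s a ∈ U s a) →
      ∀ r : S → Q → ℝ, (∀ s a, r s a ∈ Set.Icc (0 : ℝ) 1) →
      ∀ γ : ℝ, 0 ≤ γ → γ < 1 → ∀ s,
        |(1 - γ) * discR σ P r γ s - avgR σ P r s| ≤ C * (1 - γ) := by
  set 𝓜 := (fun q : (S → Q → ℝ) × (S → Q → S → ℝ) => polMat q.1 q.2) ''
    (Set.univ.pi (fun _ => stdSimplex ℝ Q) ×ˢ Set.univ.pi fun s => Set.univ.pi fun a => U s a)
  have h𝓜 : IsCompact 𝓜 :=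
    ((isCompact_univ_pi fun _ => isCompact_stdSimplex ℝ Q).prod
      (isCompact_univ_pi fun s => isCompact_univ_pi fun a => hUc s a)).image
      (by unfold polMat; fun_prop)
  have hmem : ∀ σ P, (∀ s, σ s ∈ stdSimplex ℝ Q) → (∀ s a, P s a ∈ U s a) → polMat σ P ∈ 𝓜 :=
    fun σ P hσ hP => ⟨(σ, P), ⟨fun s _ => hσ s, fun s _ a _ => hP s a⟩, rfl⟩
  obtain ⟨δ, hδ, hδle⟩ := exists_forall_le_lazy_pow_of_isCompact h𝓜 <| by
    rintro _ ⟨⟨σ, P⟩, ⟨hσ, hP⟩, rfl⟩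
    have hσ' : ∀ s, σ s ∈ stdSimplex ℝ Q := fun s => hσ s trivial
    have hP' : ∀ s a, P s a ∈ U s a := fun s a => hP s trivial a trivial
    exact ⟨polMat_mem_rowStochastic hσ' fun s a => hUs s a (hP' s a),
      polMat_irred hUs hirr hσ' hP'⟩
  refine ⟨1 / δ, one_div_pos.mpr hδ, fun σ hσ P hP r hr γ hγ0 hγ1 s => ?_⟩
  have hM := polMat_mem_rowStochastic hσ fun s a => hUs s a (hP s a)
  have hK := hδle _ (hmem σ P hσ hP)
  obtain ⟨ν, hν, hνM⟩ := exists_stationary hM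
  have hρ := polRew_mem_Icc hσ hr
  rw [avgR, (tendsto_cesaro hM hδ hK hν hνM hρ s).liminf_eq]
  refine (abs_discounted_sub_le hM hδ hK hν hνM hρ hγ0 hγ1 s).trans_eq ?_
  field_simp

theorem exists_abs_robDiscR_sub_robAvgR_le [Nonempty S] {U : S → Q → Set (S → ℝ)}
    (hUne : ∀ s a, (U s a).Nonempty) (hUc : ∀ s a, IsCompact (U s a))
    (hUs : ∀ s a, U s a ⊆ stdSimplex ℝ S) (hirr : Assump1 U) :
    ∃ C > 0, ∀ σ : S → Q → ℝ, (∀ s, σ s ∈ stdSimplex ℝ Q) →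
      ∀ r : S → Q → ℝ, (∀ s a, r s a ∈ Set.Icc (0 : ℝ) 1) →
      ∀ γ : ℝ, 0 ≤ γ → γ < 1 → ∀ s,
        |(1 - γ) * robDiscR U σ r γ s - robAvgR U σ r s| ≤ C * (1 - γ) := by
  obtain ⟨C, hC, hclose⟩ := exists_abs_discR_sub_avgR_le hUc hUs hirr
  refine ⟨C, hC, fun σ hσ r hr γ hγ0 hγ1 s => ?_⟩
  have hρ := polRew_mem_Icc hσ hr
  refine abs_mul_sInf_sub_sInf_le ⟨fun s a => (hUne s a).some, fun s a => (hUne s a).some_mem⟩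
    (sub_pos.mpr hγ1) (fun P hP => tsum_nonneg fun t => ?_)
    fun P hP => hclose σ hσ P hP r hr γ hγ0 hγ1 s
  have hM := polMat_mem_rowStochastic hσ fun s a => hUs s a (hP s a)
  exact mul_nonneg (pow_nonneg hγ0 t) (mulVec_mem_Icc (pow_mem hM t) hρ s).1

end MarkovDecisionProcess

theorem stmt16_general {S : Type*} [Fintype S] [DecidableEq S] [Nonempty S]
    {N : ℕ} (A : Fin N → Type*) [∀ i, Fintype (A i)]
    (r : Fin N → S → (∀ i, A i) → ℝ)
    (hr : ∀ i s a, r i s a ∈ Set.Icc (0 : ℝ) 1)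
    (U : S → (∀ i, A i) → Set (S → ℝ))
    (hU : ∀ s a, (U s a).Nonempty ∧ IsCompact (U s a) ∧ Convex ℝ (U s a) ∧
      U s a ⊆ stdSimplex ℝ S)
    (hirr : Assump1 U) :
    ∀ ε > (0 : ℝ), ∃ γ₀ ∈ Set.Ico (0 : ℝ) 1, ∀ γ : ℝ, γ₀ < γ → γ < 1 →
      ∀ π : ∀ i, S → A i → ℝ, (∀ i s, π i s ∈ stdSimplex ℝ (A i)) →
      (∀ (i : Fin N) (μ : S → A i → ℝ), (∀ s, μ s ∈ stdSimplex ℝ (A i)) →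
        ∀ s, (1 - γ) * robDiscR U (jointPol (Function.update π i μ)) (r i) γ s
          ≤ (1 - γ) * robDiscR U (jointPol π) (r i) γ s + ε) →
      ∀ (i : Fin N) (μ : S → A i → ℝ), (∀ s, μ s ∈ stdSimplex ℝ (A i)) →
        ∀ s, robAvgR U (jointPol (Function.update π i μ)) (r i) s
          ≤ robAvgR U (jointPol π) (r i) s + 3 * ε := by
  intro ε hε
  obtain ⟨C, hC, hclose⟩ := exists_abs_robDiscR_sub_robAvgR_le (fun s a => (hU s a).1)
    (fun s a => (hU s a).2.1) (fun s a => (hU s a).2.2.2) hirr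
  refine ⟨max 0 (1 - ε / C), ⟨le_max_left _ _, max_lt one_pos (by linarith [div_pos hε hC])⟩,
    fun γ hγ₀ hγ1 π hπ hNE i μ hμ s => ?_⟩
  have hγ0 : 0 ≤ γ := (le_max_left _ _).trans hγ₀.le
  have hCγ : C * (1 - γ) < ε := (lt_div_iff₀' hC).mp (by linarith [le_max_right 0 (1 - ε / C)])
  have hdev : ∀ j s, Function.update π i μ j s ∈ stdSimplex ℝ (A j) :=
    Function.forall_update_iff π (p := fun j πj => ∀ s, πj s ∈ stdSimplex ℝ (A j)) |>.mpr
      ⟨hμ, fun j _ => hπ j⟩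
  have hdevClose := abs_le.mp (hclose _ (jointPol_mem_stdSimplex hdev) (r i) (hr i) γ hγ0 hγ1 s)
  have hπClose := abs_le.mp (hclose _ (jointPol_mem_stdSimplex hπ) (r i) (hr i) γ hγ0 hγ1 s)
  linarith [hNE i μ hμ s]

/-- **ε-Nash Equilibrium transfer from discounted to average
reward.** For every `ε > 0` there is a threshold `γ₀ < 1` such that for every
discount factor `γ ∈ (γ₀, 1)`, every `ε`-Nash Equilibrium of the `γ`-discounted
distributionally robust Markov game (for the normalized values `(1−γ)V`) is a
`3ε`-Nash Equilibrium of the average-reward game. -/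
theorem stmt16 {S : Type*} [Fintype S] [DecidableEq S] [Nonempty S]
    {N : ℕ} (A : Fin N → Type*) [∀ i, Fintype (A i)] [∀ i, Nonempty (A i)]
    (r : Fin N → S → (∀ i, A i) → ℝ)
    (hr : ∀ i s a, r i s a ∈ Set.Icc (0 : ℝ) 1)
    (U : S → (∀ i, A i) → Set (S → ℝ))
    (hU : ∀ s a, (U s a).Nonempty ∧ IsCompact (U s a) ∧ Convex ℝ (U s a) ∧
      U s a ⊆ stdSimplex ℝ S)
    (hirr : Assump1 U) :
    ∀ ε > (0 : ℝ), ∃ γ₀ ∈ Set.Ico (0 : ℝ) 1, ∀ γ : ℝ, γ₀ < γ → γ < 1 →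
      ∀ π : ∀ i, S → A i → ℝ, (∀ i s, π i s ∈ stdSimplex ℝ (A i)) →
      (∀ (i : Fin N) (μ : S → A i → ℝ), (∀ s, μ s ∈ stdSimplex ℝ (A i)) →
        ∀ s, (1 - γ) * robDiscR U (jointPol (Function.update π i μ)) (r i) γ s
          ≤ (1 - γ) * robDiscR U (jointPol π) (r i) γ s + ε) →
      ∀ (i : Fin N) (μ : S → A i → ℝ), (∀ s, μ s ∈ stdSimplex ℝ (A i)) →
        ∀ s, robAvgR U (jointPol (Function.update π i μ)) (r i) s
          ≤ robAvgR U (jointPol π) (r i) s + 3 * ε :=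
  stmt16_general A r hr U hU hirr
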